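/- Weakest tightest precondition for deallocation: If (M,H) steps to (M',H') under free(x) with M' ⊨ β and H' = ⟦Sp(β)⟧_{M'}, then M ⊨ β ∧ x ∉ Sp(β) ∧ f(x)=f(x) and H = ⟦Sp(β ∧ x ∉ Sp(β) ∧ f(x)=f(x))⟧_M. -/
import Mathlib


attribute [local instance] Classical.propDecidable

/- Frame-logic terms and formulas over variables `V`, with a single mutable
unary function symbol `f` (modelling the heap pointer), equality, conjunction,
negation, support-membership atoms `t ∈ Sp(φ)`, if-then-else, and guarded
existential quantification `∃y:γ. φ`. -/
mutual
inductive FTm (V : Type) where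
  | var : V → FTm V
  | app : FTm V → FTm V                      -- f(t)
  | ite : FFm V → FTm V → FTm V → FTm V

inductive FFm (V : Type) where
  | eq   : FTm V → FTm V → FFm V
  | conj : FFm V → FFm V → FFm V
  | neg  : FFm V → FFm V
  | inSp : FTm V → FFm V → FFm V             -- t ∈ Sp(φ)
  | ite  : FFm V → FFm V → FFm V → FFm V
  | exq  : V → FFm V → FFm V → FFm V         -- ∃ y : γ. φ
end

/- Semantics on a model `(ν, f)`: a store `ν : V → L` and the mutable
function `f : L → L`; `val`/`holds` are the standard values/truth, while
`sp` implements the support equations of frame logic. -/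
mutual
noncomputable def FTm.val {V L : Type} [DecidableEq V] (ν : V → L) (f : L → L) : FTm V → L
  | .var z => ν z
  | .app t => f (FTm.val ν f t)
  | .ite g t₁ t₂ => if FFm.holds ν f g then FTm.val ν f t₁ else FTm.val ν f t₂

noncomputable def FFm.holds {V L : Type} [DecidableEq V] (ν : V → L) (f : L → L) : FFm V → Prop
  | .eq t₁ t₂ => FTm.val ν f t₁ = FTm.val ν f t₂
  | .conj φ ψ => FFm.holds ν f φ ∧ FFm.holds ν f ψ
  | .neg φ => ¬ FFm.holds ν f φ
  | .inSp t φ => FTm.val ν f t ∈ FFm.sp ν f φ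
  | .ite g φ ψ => if FFm.holds ν f g then FFm.holds ν f φ else FFm.holds ν f ψ
  | .exq y γ φ => ∃ u : L, FFm.holds (Function.update ν y u) f γ ∧
      FFm.holds (Function.update ν y u) f φ

noncomputable def FTm.sp {V L : Type} [DecidableEq V] (ν : V → L) (f : L → L) : FTm V → Set L
  | .var _ => ∅
  | .app t => {FTm.val ν f t} ∪ FTm.sp ν f t
  | .ite g t₁ t₂ => FFm.sp ν f g ∪
      if FFm.holds ν f g then FTm.sp ν f t₁ else FTm.sp ν f t₂

noncomputable def FFm.sp {V L : Type} [DecidableEq V] (ν : V → L) (f : L → L) : FFm V → Set L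
  | .eq t₁ t₂ => FTm.sp ν f t₁ ∪ FTm.sp ν f t₂
  | .conj φ ψ => FFm.sp ν f φ ∪ FFm.sp ν f ψ
  | .neg φ => FFm.sp ν f φ
  | .inSp t φ => FTm.sp ν f t ∪ FFm.sp ν f φ
  | .ite g φ ψ => FFm.sp ν f g ∪
      if FFm.holds ν f g then FFm.sp ν f φ else FFm.sp ν f ψ
  | .exq y γ φ => (⋃ u : L, FFm.sp (Function.update ν y u) f γ) ∪
      ⋃ u : L, {a | FFm.holds (Function.update ν y u) f γ ∧
        a ∈ FFm.sp (Function.update ν y u) f φ}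
end

/-- Weakest tightest precondition for deallocation: if `(M,H)` steps to
`(M',H')` under `free(x)` (so `⟦x⟧ ∈ H`, `M' = M`, and `H' = H \ {⟦x⟧}`)
with `M' ⊨ β` and `H' = ⟦Sp(β)⟧_{M'}`, then `M` satisfies
`β ∧ x ∉ Sp(β) ∧ f(x)=f(x)` and `H` is the support of this formula in `M`. -/
theorem dealloc_wtp {V L : Type} [DecidableEq V]
    (ν : V → L) (f : L → L) (H : Set L) (x : V) (β : FFm V)
    (hstep : ν x ∈ H)
    (hpost : FFm.holds ν f β)
    (hH' : H \ {ν x} = FFm.sp ν f β) :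
    FFm.holds ν f
      (FFm.conj (FFm.conj β (FFm.neg (FFm.inSp (FTm.var x) β)))
        (FFm.eq (FTm.app (FTm.var x)) (FTm.app (FTm.var x)))) ∧
    H = FFm.sp ν f
      (FFm.conj (FFm.conj β (FFm.neg (FFm.inSp (FTm.var x) β)))
        (FFm.eq (FTm.app (FTm.var x)) (FTm.app (FTm.var x)))) := by
  have hx : ν x ∉ FFm.sp ν f β := by
    rw [← hH']; simp
  constructor
  · refine ⟨⟨hpost, ?_⟩, rfl⟩
    simpa [FFm.holds, FTm.val] using hx
  · have : FFm.sp ν f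
      (FFm.conj (FFm.conj β (FFm.neg (FFm.inSp (FTm.var x) β)))
        (FFm.eq (FTm.app (FTm.var x)) (FTm.app (FTm.var x))))
      = FFm.sp ν f β ∪ {ν x} := by
      simp [FFm.sp, FTm.sp, FTm.val, Set.union_comm, Set.union_assoc]
    rw [this, ← hH']
    ext a; by_cases ha : a = ν x <;> simp [ha, hstep]
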